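/- arXiv:2508.06559 — 6 statements merged into one kernel-verified Lean document; each statement's English description precedes it below -/
import Mathlib

section
/- In a two-player zero-sum game, if the average overall regret of each player is at most ε, then the average strategy profile (σ̄₀, σ̄₁) is a 2ε-Nash equilibrium; that is, for each player p, u_p(σ̄_p, σ̄_{-p}) + 2ε ≥ max over σ'_p of u_p(σ'_p, σ̄_{-p}). -/
open Finset

/-- In a two-player zero-sum game, if the average overall regret of each player is at
most ε, then the average strategy profile is a 2ε-Nash equilibrium. -/
theorem stmt_0 {S₀ S₁ : Type} [Fintype S₀] [Fintype S₁]
    (u : S₀ → S₁ → ℝ)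
    (U : (S₀ → ℝ) → (S₁ → ℝ) → ℝ)
    (hU : ∀ σ τ, U σ τ = ∑ a, ∑ b, σ a * τ b * u a b)
    (T : ℕ) (hT : 0 < T)
    (σ0 : ℕ → S₀ → ℝ) (σ1 : ℕ → S₁ → ℝ)
    (hσ0 : ∀ t, (∀ a, 0 ≤ σ0 t a) ∧ ∑ a, σ0 t a = 1)
    (hσ1 : ∀ t, (∀ b, 0 ≤ σ1 t b) ∧ ∑ b, σ1 t b = 1)
    (ε : ℝ)
    (hreg0 : ∀ σ' : S₀ → ℝ, (∀ a, 0 ≤ σ' a) → (∑ a, σ' a) = 1 →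
      (1 / T : ℝ) * ∑ t ∈ Finset.range T, (U σ' (σ1 t) - U (σ0 t) (σ1 t)) ≤ ε)
    (hreg1 : ∀ τ' : S₁ → ℝ, (∀ b, 0 ≤ τ' b) → (∑ b, τ' b) = 1 →
      (1 / T : ℝ) * ∑ t ∈ Finset.range T, ((- U (σ0 t) τ') - (- U (σ0 t) (σ1 t))) ≤ ε) :
    (∀ σ' : S₀ → ℝ, (∀ a, 0 ≤ σ' a) → (∑ a, σ' a) = 1 →
      U σ' (fun b => (1 / T : ℝ) * ∑ t ∈ Finset.range T, σ1 t b)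
        ≤ U (fun a => (1 / T : ℝ) * ∑ t ∈ Finset.range T, σ0 t a)
            (fun b => (1 / T : ℝ) * ∑ t ∈ Finset.range T, σ1 t b) + 2 * ε) ∧
    (∀ τ' : S₁ → ℝ, (∀ b, 0 ≤ τ' b) → (∑ b, τ' b) = 1 →
      - U (fun a => (1 / T : ℝ) * ∑ t ∈ Finset.range T, σ0 t a) τ'
        ≤ - U (fun a => (1 / T : ℝ) * ∑ t ∈ Finset.range T, σ0 t a)
              (fun b => (1 / T : ℝ) * ∑ t ∈ Finset.range T, σ1 t b) + 2 * ε) := by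
  have hTpos : (0:ℝ) < T := by exact_mod_cast hT
  -- bilinearity: linearity in the second argument
  have lin2 : ∀ (f : S₀ → ℝ) (g : ℕ → S₁ → ℝ),
      U f (fun b => (1 / T : ℝ) * ∑ t ∈ range T, g t b)
        = (1 / T : ℝ) * ∑ t ∈ range T, U f (g t) := by
    intro f g
    simp only [hU, Finset.mul_sum, Finset.sum_mul]
    conv_rhs => rw [Finset.sum_comm]
    refine Finset.sum_congr rfl fun a _ => ?_
    rw [Finset.sum_comm]
    exact Finset.sum_congr rfl fun t _ => Finset.sum_congr rfl fun b _ => by ring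
  -- linearity in the first argument
  have lin1 : ∀ (g : ℕ → S₀ → ℝ) (f : S₁ → ℝ),
      U (fun a => (1 / T : ℝ) * ∑ t ∈ range T, g t a) f
        = (1 / T : ℝ) * ∑ t ∈ range T, U (g t) f := by
    intro g f
    simp only [hU, Finset.mul_sum, Finset.sum_mul]
    conv_rhs => rw [Finset.sum_comm]
    refine Finset.sum_congr rfl fun a _ => ?_
    rw [Finset.sum_comm]
    exact Finset.sum_congr rfl fun t _ => Finset.sum_congr rfl fun b _ => by ring
  -- the average strategies are mixed strategies
  have hsbar_nonneg : ∀ a, 0 ≤ (1 / T : ℝ) * ∑ t ∈ range T, σ0 t a := fun a =>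
    mul_nonneg (by positivity) (Finset.sum_nonneg fun t _ => (hσ0 t).1 a)
  have htbar_nonneg : ∀ b, 0 ≤ (1 / T : ℝ) * ∑ t ∈ range T, σ1 t b := fun b =>
    mul_nonneg (by positivity) (Finset.sum_nonneg fun t _ => (hσ1 t).1 b)
  have hsbar_sum : ∑ a, (1 / T : ℝ) * ∑ t ∈ range T, σ0 t a = 1 := by
    rw [← Finset.mul_sum, Finset.sum_comm,
      Finset.sum_congr rfl (fun t _ => (hσ0 t).2), Finset.sum_const, card_range,
      nsmul_eq_mul, mul_one]
    field_simp
  have htbar_sum : ∑ b, (1 / T : ℝ) * ∑ t ∈ range T, σ1 t b = 1 := by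
    rw [← Finset.mul_sum, Finset.sum_comm,
      Finset.sum_congr rfl (fun t _ => (hσ1 t).2), Finset.sum_const, card_range,
      nsmul_eq_mul, mul_one]
    field_simp
  -- abbreviation for the average realized payoff
  set v : ℝ := (1 / T : ℝ) * ∑ t ∈ range T, U (σ0 t) (σ1 t) with hv
  -- from player 0's regret bound
  have h0 : ∀ σ' : S₀ → ℝ, (∀ a, 0 ≤ σ' a) → (∑ a, σ' a) = 1 →
      U σ' (fun b => (1 / T : ℝ) * ∑ t ∈ range T, σ1 t b) ≤ v + ε := by
    intro σ' h1 h2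
    have h := hreg0 σ' h1 h2
    rw [Finset.sum_sub_distrib, mul_sub] at h
    rw [lin2 σ' σ1]
    linarith
  -- from player 1's regret bound
  have h1 : ∀ τ' : S₁ → ℝ, (∀ b, 0 ≤ τ' b) → (∑ b, τ' b) = 1 →
      v - ε ≤ U (fun a => (1 / T : ℝ) * ∑ t ∈ range T, σ0 t a) τ' := by
    intro τ' hh1 hh2
    have h := hreg1 τ' hh1 hh2
    simp only [sub_neg_eq_add] at h
    rw [Finset.sum_add_distrib, mul_add, Finset.sum_neg_distrib] at h
    rw [lin1 σ0 τ']
    linarith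
  constructor
  · intro σ' hh1 hh2
    have hA := h0 σ' hh1 hh2
    have hB := h1 _ htbar_nonneg htbar_sum
    linarith
  · intro τ' hh1 hh2
    have hA := h1 τ' hh1 hh2
    have hB := h0 _ hsbar_nonneg hsbar_sum
    linarith
end

section
/- Under regret matching, where at each iteration t+1 the probability of action a is proportional to the positive part of cumulative regret R^t(a) = Σ_{s≤t} (u(a) − ⟨σ^s, u⟩) (and uniform if all positive parts are zero), the maximum cumulative regret after T iterations satisfies max_a Σ_{t=1}^T (u^t(a) − ⟨σ^t, u^t⟩) ≤ Δ·√(|A|·T), where Δ bounds |u^t(a) − u^t(b)| for all t, a, b. -/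
open Finset

/-- Regret matching guarantees maximum cumulative regret at most Δ·√(|A|·T). -/
theorem stmt_1 {A : Type} [Fintype A] [Nonempty A]
    (u : ℕ → A → ℝ) (Δ : ℝ)
    (hΔ : ∀ t a b, |u t a - u t b| ≤ Δ)
    (σ : ℕ → A → ℝ) (R : ℕ → A → ℝ)
    (hR : ∀ t a, R t a = ∑ s ∈ Finset.range t, (u s a - ∑ b, σ s b * u s b))
    (hσpos : ∀ t, 0 < (∑ a, max (R t a) 0) →
      ∀ a, σ t a = max (R t a) 0 / ∑ b, max (R t b) 0)
    (hσzero : ∀ t, (∑ a, max (R t a) 0) = 0 →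
      ∀ a, σ t a = (Fintype.card A : ℝ)⁻¹)
    (T : ℕ) :
    ∀ a, R T a ≤ Δ * Real.sqrt ((Fintype.card A : ℝ) * T) := by
  classical
  set r : ℕ → A → ℝ := fun t a => u t a - ∑ b, σ t b * u t b with hr
  have hΔ0 : 0 ≤ Δ := by
    have := hΔ 0 (Classical.arbitrary A) (Classical.arbitrary A)
    simpa using le_trans (abs_nonneg _) this
  have hcard : (0:ℝ) < (Fintype.card A : ℝ) := by
    exact_mod_cast Fintype.card_pos
  have hRrec : ∀ t a, R (t+1) a = R t a + r t a := by
    intro t a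
    rw [hR, Finset.sum_range_succ, ← hR]
  have hSnn : ∀ t, 0 ≤ ∑ a, max (R t a) 0 :=
    fun t => Finset.sum_nonneg fun a _ => le_max_right _ _
  -- σ is a probability distribution
  have hσnn : ∀ t a, 0 ≤ σ t a := by
    intro t a
    rcases lt_or_eq_of_le (hSnn t) with h | h
    · rw [hσpos t h a]
      exact div_nonneg (le_max_right _ _) (le_of_lt h)
    · rw [hσzero t h.symm a]
      positivity
  have hσsum : ∀ t, ∑ b, σ t b = 1 := by
    intro t
    rcases lt_or_eq_of_le (hSnn t) with h | h
    · rw [Finset.sum_congr rfl fun b _ => hσpos t h b, ← Finset.sum_div,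
        div_self (ne_of_gt h)]
    · rw [Finset.sum_congr rfl fun b _ => hσzero t h.symm b]
      simp [Finset.card_univ]
  -- bound on |r|
  have hrbound : ∀ t a, |r t a| ≤ Δ := by
    intro t a
    have : r t a = ∑ b, σ t b * (u t a - u t b) := by
      simp only [hr, mul_sub, Finset.sum_sub_distrib, ← Finset.sum_mul, hσsum t]
      ring
    rw [this]
    calc |∑ b, σ t b * (u t a - u t b)| ≤ ∑ b, |σ t b * (u t a - u t b)| :=
          Finset.abs_sum_le_sum_abs _ _
      _ ≤ ∑ b, σ t b * Δ := by
          apply Finset.sum_le_sum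
          intro b _
          rw [abs_mul, abs_of_nonneg (hσnn t b)]
          exact mul_le_mul_of_nonneg_left (hΔ t a b) (hσnn t b)
      _ = Δ := by rw [← Finset.sum_mul, hσsum t, one_mul]
  -- Blackwell condition
  have hdot : ∀ t, ∑ a, max (R t a) 0 * r t a = 0 := by
    intro t
    rcases lt_or_eq_of_le (hSnn t) with h | h
    · set S := ∑ a, max (R t a) 0 with hS
      have hinner : ∑ b, σ t b * u t b = (∑ b, max (R t b) 0 * u t b) / S := by
        rw [Finset.sum_div]
        exact Finset.sum_congr rfl fun b _ => by
          rw [hσpos t h b]; ring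
      have : ∀ a, max (R t a) 0 * r t a
          = max (R t a) 0 * u t a - max (R t a) 0 * ((∑ b, max (R t b) 0 * u t b) / S) := by
        intro a; rw [hr]; simp only [hinner]; ring
      rw [Finset.sum_congr rfl fun a _ => this a, Finset.sum_sub_distrib,
        ← Finset.sum_mul, ← hS, mul_div_cancel₀ _ (ne_of_gt h)]
      ring
    · have hz : ∀ a ∈ Finset.univ, max (R t a) 0 = 0 := by
        rw [← Finset.sum_eq_zero_iff_of_nonneg fun a _ => le_max_right _ _]
        exact h.symm
      exact Finset.sum_eq_zero fun a _ => by rw [hz a (Finset.mem_univ a), zero_mul]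
  -- pointwise inequality
  have key : ∀ x y : ℝ, (max (x+y) 0)^2 ≤ (max x 0 + y)^2 := by
    intro x y
    have h1 : max (x+y) 0 ≤ |max x 0 + y| := by
      rcases le_or_gt (x+y) 0 with h | h
      · rw [max_eq_right h]; exact abs_nonneg _
      · calc max (x+y) 0 = x + y := max_eq_left h.le
          _ ≤ max x 0 + y := by gcongr; exact le_max_left _ _
          _ ≤ |max x 0 + y| := le_abs_self _
    calc (max (x+y) 0)^2 ≤ |max x 0 + y|^2 :=
          pow_le_pow_left₀ (le_max_right _ _) h1 2
      _ = (max x 0 + y)^2 := sq_abs _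
  -- potential
  set Φ : ℕ → ℝ := fun t => ∑ a, (max (R t a) 0)^2 with hΦdef
  have hΦstep : ∀ t, Φ (t+1) ≤ Φ t + (Fintype.card A : ℝ) * Δ^2 := by
    intro t
    calc Φ (t+1) = ∑ a, (max (R t a + r t a) 0)^2 := by
          simp only [hΦdef, hRrec]
      _ ≤ ∑ a, (max (R t a) 0 + r t a)^2 :=
          Finset.sum_le_sum fun a _ => key _ _
      _ = Φ t + 2 * ∑ a, max (R t a) 0 * r t a + ∑ a, (r t a)^2 := by
          simp only [hΦdef, add_sq, Finset.sum_add_distrib, Finset.mul_sum]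
          ring
      _ = Φ t + ∑ a, (r t a)^2 := by rw [hdot t]; ring
      _ ≤ Φ t + (Fintype.card A : ℝ) * Δ^2 := by
          gcongr
          calc ∑ a, (r t a)^2 ≤ ∑ _a : A, Δ^2 := by
                apply Finset.sum_le_sum
                intro a _
                rw [← sq_abs]
                exact pow_le_pow_left₀ (abs_nonneg _) (hrbound t a) 2
            _ = (Fintype.card A : ℝ) * Δ^2 := by
                simp [Finset.card_univ]
  have hΦbound : ∀ t : ℕ, Φ t ≤ t * ((Fintype.card A : ℝ) * Δ^2) := by
    intro t
    induction t with
    | zero =>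
        simp only [hΦdef]
        have : ∀ a, R 0 a = 0 := fun a => by simp [hR]
        simp [this]
    | succ n ih =>
        calc Φ (n+1) ≤ Φ n + (Fintype.card A : ℝ) * Δ^2 := hΦstep n
          _ ≤ n * ((Fintype.card A : ℝ) * Δ^2) + (Fintype.card A : ℝ) * Δ^2 := by gcongr
          _ = (n+1 : ℕ) * ((Fintype.card A : ℝ) * Δ^2) := by push_cast; ring
  intro a
  have h1 : R T a ≤ max (R T a) 0 := le_max_left _ _
  have h2 : (max (R T a) 0)^2 ≤ Δ^2 * ((Fintype.card A : ℝ) * T) := by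
    calc (max (R T a) 0)^2 ≤ Φ T :=
          Finset.single_le_sum (f := fun a => (max (R T a) 0)^2)
            (fun b _ => sq_nonneg _) (Finset.mem_univ a)
      _ ≤ T * ((Fintype.card A : ℝ) * Δ^2) := hΦbound T
      _ = Δ^2 * ((Fintype.card A : ℝ) * T) := by ring
  have h3 : max (R T a) 0 ≤ Real.sqrt (Δ^2 * ((Fintype.card A : ℝ) * T)) := by
    rw [← Real.sqrt_sq (le_max_right (R T a) 0)]
    exact Real.sqrt_le_sqrt h2
  calc R T a ≤ max (R T a) 0 := h1
    _ ≤ Real.sqrt (Δ^2 * ((Fintype.card A : ℝ) * T)) := h3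
    _ = Δ * Real.sqrt ((Fintype.card A : ℝ) * T) := by
        rw [Real.sqrt_mul (sq_nonneg Δ), Real.sqrt_sq hΔ0]
end

section
/- The number of nonempty subsets S of the multiset of 40 numerical cards (four copies each of the values 1 through 10) such that the values in S sum to 11 is 2764, where cards of the same value but different suits are distinguished. -/
/-!
A set of cards is the same as a choice, for each value `v`, of a set of suits. Choosing `k` of
the four suits of value `v` can be done in `C(4, k)` ways and contributes `v * k` to the sum, so
the count obeys a recursion over the values, which the kernel evaluates.
-/

open Finset

/-- The number of ways to choose a subset of each of `n` blocks of `b` objects, the objects of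
block `i` weighing `w i`, with total weight `m`. -/
def subsetSumCount (b : ℕ) (w : ℕ → ℕ) : ℕ → ℕ → ℕ
  | 0, m => if m = 0 then 1 else 0
  | n + 1, m => ∑ k ∈ range (b + 1),
      if w n * k ≤ m then b.choose k * subsetSumCount b w n (m - w n * k) else 0

namespace Finset

variable {α β : Type*} [Fintype α] [Fintype β] [DecidableEq α] [DecidableEq β]

def prodEquivPi : Finset (α × β) ≃ (α → Finset β) where
  toFun S a := {b | (a, b) ∈ S}
  invFun f := {c | c.2 ∈ f c.1}
  left_inv S := by ext; simp
  right_inv f := by ext; simp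

theorem sum_fst_eq_sum_mul_card_prodEquivPi (w : α → ℕ) (S : Finset (α × β)) :
    ∑ c ∈ S, w c.1 = ∑ a, w a * #(prodEquivPi S a) := by
  rw [← Fintype.sum_ite_mem, Fintype.sum_prod_type]
  refine sum_congr rfl fun a _ => ?_
  simp [prodEquivPi, ← sum_filter, mul_comm]

end Finset

section

variable {β : Type*} [Fintype β] (w : ℕ → ℕ)

theorem card_filter_sum_mul_card_snoc (n m : ℕ) :
    #{f : Fin (n + 1) → Finset β | ∑ i : Fin _, w i * #(f i) = m} =
      ∑ t : Finset β, #{g : Fin n → Finset β | ∑ i : Fin _, w i * #(g i) + w n * #t = m} := by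
  simp only [card_filter]
  rw [← (Fin.snocEquiv _).sum_comp, Fintype.sum_prod_type]
  simp [Fin.sum_univ_castSucc]

theorem card_filter_sum_mul_card_eq_subsetSumCount (n m : ℕ) :
    #{f : Fin n → Finset β | ∑ i : Fin _, w i * #(f i) = m} =
      subsetSumCount (Fintype.card β) w n m := by
  induction n generalizing m with
  | zero => simp [subsetSumCount, eq_comm, apply_ite card]
  | succ n ih =>
    rw [card_filter_sum_mul_card_snoc, ← powerset_univ,
      sum_powerset_apply_card
        (fun k => #{g : Fin n → Finset β | ∑ i : Fin _, w i * #(g i) + w n * k = m}),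
      card_univ, subsetSumCount]
    refine sum_congr rfl fun k _ => ?_
    split_ifs
    · rw [smul_eq_mul, ← ih]
      congr 2; ext g; simp only [mem_filter, mem_univ, true_and]; omega
    · rw [card_eq_zero.2 (filter_eq_empty_iff.2 fun g _ => by omega), smul_zero]

theorem card_filter_sum_fst_eq_subsetSumCount [DecidableEq β] (n m : ℕ) :
    #{S : Finset (Fin n × β) | ∑ c ∈ S, w c.1 = m} = subsetSumCount (Fintype.card β) w n m := by
  rw [← card_filter_sum_mul_card_eq_subsetSumCount]
  exact card_equiv prodEquivPi fun S => by
    simp [sum_fst_eq_sum_mul_card_prodEquivPi (fun i : Fin n => w i)]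

end

/-- The number of nonempty subsets of the 40 distinguishable numerical cards
(values 1..10, four suits each) whose values sum to 11 is 2764. -/
theorem stmt_3 :
    ((Finset.univ : Finset (Finset (Fin 10 × Fin 4))).filter
      (fun S => S.Nonempty ∧ ∑ c ∈ S, (c.1.val + 1) = 11)).card = 2764 := by
  have nonempty_of_sum (S : Finset (Fin 10 × Fin 4)) (hS : ∑ c ∈ S, (c.1.val + 1) = 11) :
      S.Nonempty := nonempty_of_sum_ne_zero (by rw [hS]; norm_num)
  rw [filter_congr fun S _ => and_iff_right_of_imp (nonempty_of_sum S),
    card_filter_sum_fst_eq_subsetSumCount (· + 1), Fintype.card_fin]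
  decide
end

section
/- RepeatBlocks correctness: given a list t partitioned into n consecutive blocks of sizes b₀,…,b_{n−1} (with Σ bᵢ = length of t), and repeat counts r₀,…,r_{n−1}, the list obtained by concatenating, for each i in order, rᵢ copies of the i-th block equals t indexed by the index list constructed as follows: let bgn be the list where block-start offsets s_i = b₀+⋯+b_{i−1} are each repeated rᵢ times, let bls be the list where bᵢ is repeated rᵢ times, let blk = bgn repeat-interleaved by bls, let csm = the exclusive cumulative sums of bls repeat-interleaved by bls, and let idx k = k − csm k + blk k for each position k. -/
open Finset

/-- Repeat-interleave of a list `a` by a count list `c` (positionally):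
concatenation over `i` of `c[i]` copies of `a[i]`. -/
def rinterleave {α : Type} (a : List α) (c : List ℕ) : List α :=
  (a.zip c).flatMap (fun p => List.replicate p.2 p.1)

/-- Exclusive cumulative sums of a list of naturals. -/
def ecumsum (l : List ℕ) : List ℕ :=
  (List.range l.length).map (fun i => (l.take i).sum)


lemma rinterleave_nil (c : List ℕ) : rinterleave ([] : List ℕ) c = [] := rfl

lemma rinterleave_cons (x : ℕ) (xs : List ℕ) (c : ℕ) (cs : List ℕ) :
    rinterleave (x :: xs) (c :: cs) = List.replicate c x ++ rinterleave xs cs := rfl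

lemma rinterleave_map (g : ℕ → ℕ) (a : List ℕ) (c : List ℕ) :
    rinterleave (a.map g) c = (rinterleave a c).map g := by
  simp [rinterleave, List.zip_map_left, List.flatMap_map, List.map_flatMap, Prod.map]

lemma ecumsum_cons (c : ℕ) (l : List ℕ) :
    ecumsum (c :: l) = 0 :: (ecumsum l).map (c + ·) := by
  simp [ecumsum, List.range_succ_eq_map, List.map_map, Function.comp]

lemma length_rinterleave_ecumsum (l : List ℕ) :
    (rinterleave (ecumsum l) l).length = l.sum := by
  induction l with
  | nil => rfl
  | cons c cs ih =>
      rw [ecumsum_cons, rinterleave_cons, rinterleave_map]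
      simp [ih]

lemma length_flatMap_rep (p : List (ℕ × ℕ)) :
    (p.flatMap (fun x => List.replicate x.2 x.1)).length = (p.map Prod.snd).sum := by
  induction p with
  | nil => rfl
  | cons a q ih => simp [ih]

lemma main_idx (p : List (ℕ × ℕ)) :
    (List.range (p.flatMap (fun x => List.replicate x.2 x.1)).length).map
        (fun k => k - (rinterleave (ecumsum (p.map Prod.snd)) (p.map Prod.snd)).getD k 0
          + (p.flatMap (fun x => List.replicate x.2 x.1)).getD k 0)
      = p.flatMap (fun x => (List.range x.2).map (fun o => o + x.1)) := by
  induction p with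
  | nil => rfl
  | cons a q ih =>
      obtain ⟨s, c⟩ := a
      have hcsml : (rinterleave (ecumsum (q.map Prod.snd)) (q.map Prod.snd)).length
          = (q.flatMap (fun x => List.replicate x.2 x.1)).length := by
        rw [length_rinterleave_ecumsum, length_flatMap_rep]
      simp only [List.flatMap_cons, List.map_cons, ecumsum_cons, rinterleave_cons,
        rinterleave_map, List.length_append, List.length_replicate, List.range_add,
        List.map_append, List.map_map]
      congr 1
      · apply List.ext_getElem (by simp)
        intro k hk _
        simp only [List.getElem_map, List.getElem_range]
        have hk' : k < c := by simpa using hk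
        rw [List.getD_eq_getElem _ _ (by simp [hk']; omega),
            List.getD_eq_getElem _ _ (by simp [hk']; omega),
            List.getElem_append_left (by simpa), List.getElem_append_left (by simpa)]
        simp [Nat.add_comm]
      · rw [← ih]
        apply List.ext_getElem (by simp)
        intro k hk _
        simp only [List.getElem_map, List.getElem_range, Function.comp]
        have hk' : k < (q.flatMap (fun x => List.replicate x.2 x.1)).length := by
          simpa using hk
        rw [List.getD_eq_getElem _ _
              (by simp only [List.length_append, List.length_replicate, List.length_map,
                  length_rinterleave_ecumsum]; rw [length_rinterleave_ecumsum] at hcsml; omega),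
            List.getD_eq_getElem _ _
              (by simp only [List.length_append, List.length_replicate]; omega),
            List.getElem_append_right (by simp) ,
            List.getElem_append_right (by simp),
            List.getD_eq_getElem _ _ hk',
            List.getD_eq_getElem _ _ (by rw [hcsml]; exact hk')]
        simp only [List.length_replicate, Nat.add_sub_cancel_left]
        rw [List.getElem_map]
        omega

lemma zip_rep {α β γ : Type} (l : List γ) (r : γ → ℕ) (f : γ → α) (g : γ → β) :
    (l.flatMap fun i => List.replicate (r i) (f i)).zip
      (l.flatMap fun i => List.replicate (r i) (g i))
      = l.flatMap fun i => List.replicate (r i) (f i, g i) := by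
  induction l with
  | nil => rfl
  | cons a q ih =>
      simp only [List.flatMap_cons]
      rw [List.zip_append (by simp), ih, List.zip_replicate, Nat.min_self]

lemma block_eq {α : Type} [Inhabited α] (t : List α) (s c : ℕ) (h : s + c ≤ t.length) :
    (t.drop s).take c = (List.range c).map (fun o => t.getD (o + s) default) := by
  apply List.ext_getElem (by simp; omega)
  intro k h1 h2
  have hk : k < c := by simp at h2; omega
  rw [List.getElem_take, List.getElem_drop, List.getElem_map, List.getElem_range,
    List.getD_eq_getElem _ _ (by omega)]
  congr 1
  omega


/-- RepeatBlocks correctness: concatenating, for each block `i`, `r i` copies of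
the `i`-th block of `t` equals `t` indexed by the index list built from
`bgn`, `bls`, `blk` and `csm` as in the RepeatBlocks algorithm. -/
theorem stmt_6 {α : Type} [Inhabited α] (n : ℕ) (t : List α)
    (b r : Fin n → ℕ) (hlen : (∑ i, b i) = t.length) :
    let s : Fin n → ℕ := fun i => ∑ j ∈ Finset.univ.filter (fun j => j < i), b j
    let bgn : List ℕ := (List.finRange n).flatMap (fun i => List.replicate (r i) (s i))
    let bls : List ℕ := (List.finRange n).flatMap (fun i => List.replicate (r i) (b i))
    let blk : List ℕ := rinterleave bgn bls
    let csm : List ℕ := rinterleave (ecumsum bls) bls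
    let idx : List ℕ :=
      (List.range blk.length).map (fun k => k - csm.getD k 0 + blk.getD k 0)
    (List.finRange n).flatMap
        (fun i => (List.replicate (r i) ((t.drop (s i)).take (b i))).flatten)
      = idx.map (fun k => t.getD k default) := by
  intro s bgn bls blk csm idx
  set p : List (ℕ × ℕ) :=
    (List.finRange n).flatMap (fun i => List.replicate (r i) (s i, b i)) with hp
  have hzip : bgn.zip bls = p := zip_rep _ _ _ _
  have hbls : bls = p.map Prod.snd := by
    simp [bls, hp, List.map_flatMap]
  have hblk : blk = p.flatMap (fun x => List.replicate x.2 x.1) := by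
    show rinterleave bgn bls = _
    rw [rinterleave, hzip]
  have hcsm : csm = rinterleave (ecumsum (p.map Prod.snd)) (p.map Prod.snd) := by
    show rinterleave (ecumsum bls) bls = _
    rw [hbls]
  have hidx : idx = p.flatMap (fun x => (List.range x.2).map (fun o => o + x.1)) := by
    show (List.range blk.length).map _ = _
    rw [hblk, hcsm]
    exact main_idx p
  rw [hidx, List.map_flatMap, hp, List.flatMap_assoc]
  apply List.flatMap_congr
  intro i _
  have hsb : s i + b i ≤ t.length := by
    rw [← hlen]
    calc s i + b i = ∑ j ∈ insert i (Finset.univ.filter (fun j => j < i)), b j := by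
          rw [Finset.sum_insert (by simp)]; ring
      _ ≤ ∑ j, b j := Finset.sum_le_sum_of_subset (Finset.subset_univ _)
  rw [block_eq t (s i) (b i) hsb]
  simp only [List.flatMap_replicate, List.map_map]
  rfl
end

section
/- The edge tensor produced by t_edg = arange(Q) ⊗_{c_scr} t_brf (RepeatBlocks of the identity index list with block sizes c_scr and repeats t_brf) correctly encodes FGT parentage: the k-th output entry equals the FGT index of the parent (g, s) such that k corresponds to the pairing of the j-th child action of GT node g with its s-th inherited score, when children of each parent are enumerated action-major. -/
/-!
The edge list is the concatenation, over GT nodes `g`, of `brf g` copies of the score block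
`[offset g, …, offset g + cscr g - 1]`. Reading a concatenation at "total length of the first
`i` pieces plus `p`" gives entry `p` of piece `i`; this is applied once to the GT blocks, whose
prefix lengths are `∑_{g' < g} cscr g' * brf g'`, and once to the `brf g` equal copies, whose
prefix lengths are `j * cscr g`.
-/

namespace List

theorem getD_flatMap_sum_take_add {α β : Type*} (f : α → List β) {l : List α} {i p : ℕ}
    (hi : i < l.length) (hp : p < (f l[i]).length) (d : β) :
    (l.flatMap f).getD (((l.take i).map fun a => (f a).length).sum + p) d = (f l[i]).getD p d := by
  have hsplit : l.flatMap f = (l.take i).flatMap f ++ (f l[i] ++ (l.drop (i + 1)).flatMap f) := by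
    rw [← flatMap_cons, ← flatMap_append, ← drop_eq_getElem_cons hi, take_append_drop]
  rw [hsplit, ← length_flatMap, getD_append_right _ _ _ _ (Nat.le_add_right _ _),
    Nat.add_sub_cancel_left, getD_append _ _ _ _ hp]

theorem getD_flatMap_const_mul_add {α β : Type*} (b : List β) {l : List α} {j s : ℕ}
    (hj : j < l.length) (hs : s < b.length) (d : β) :
    (l.flatMap fun _ => b).getD (j * b.length + s) d = b.getD s d := by
  simpa [map_const', sum_replicate, Nat.min_eq_left hj.le]
    using getD_flatMap_sum_take_add (fun _ => b) hj hs d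

theorem sum_map_take_finRange {M : Type*} [AddCommMonoid M] {n : ℕ} (f : Fin n → M) (g : Fin n) :
    (((finRange n).take g).map f).sum = ∑ g' with g' < g, f g' := by
  rw [map_take, ← ofFn_eq_map, sum_take_ofFn]
  rfl

end List

/-- Correctness of the edge tensor `t_edg = arange(Q) ⊗_{c_scr} t_brf`:
the entry at the global position of the pairing of the `j`-th child action of
GT node `g` with its `s`-th inherited score (children enumerated action-major)
is the FGT index `offset g + s` of the corresponding parent, where
`offset g = Σ_{g' < g} c_scr g'` and `Q = Σ_g c_scr g`. -/
theorem stmt_10 (n : ℕ) (cscr brf : Fin n → ℕ) :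
    let offset : Fin n → ℕ := fun g => ∑ g' ∈ Finset.univ.filter (fun g' => g' < g), cscr g'
    let tedg : List ℕ :=
      (List.finRange n).flatMap (fun g =>
        (List.range (brf g)).flatMap (fun _ =>
          (List.range (cscr g)).map (fun s => offset g + s)))
    tedg.length = (∑ g, cscr g * brf g) ∧
      ∀ (g : Fin n) (j s : ℕ), j < brf g → s < cscr g →
        tedg.getD
          ((∑ g' ∈ Finset.univ.filter (fun g' => g' < g), cscr g' * brf g')
            + j * cscr g + s) 0
          = offset g + s := by
  intro offset tedg
  set scores : Fin n → List ℕ := fun g => (List.range (cscr g)).map (offset g + ·)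
  set block : Fin n → List ℕ := fun g => (List.range (brf g)).flatMap fun _ => scores g
  have hscores : ∀ g, (scores g).length = cscr g := by simp [scores]
  have hblock : ∀ g, (block g).length = cscr g * brf g := by
    simp [block, hscores, List.length_flatMap, List.map_const', List.sum_replicate, mul_comm]
  refine ⟨?_, fun g j s hj hs => ?_⟩
  · show ((List.finRange n).flatMap block).length = _
    simp only [List.length_flatMap, hblock, Fin.sum_univ_def]
  · have hprefix : ∑ g' with g' < g, cscr g' * brf g'
        = (((List.finRange n).take g).map fun g' => (block g').length).sum := by
      simp only [hblock, List.sum_map_take_finRange]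
    have hg : (g : ℕ) < (List.finRange n).length := by simp
    have hj' : j < (List.range (brf g)).length := by simpa using hj
    have hs' : s < (scores g).length := by simpa [hscores] using hs
    have hpos : j * cscr g + s < (block (List.finRange n)[(g : ℕ)]).length := by
      simp only [List.getElem_finRange, Fin.cast_mk, Fin.eta, hblock]
      nlinarith
    rw [hprefix, add_assoc, List.getD_flatMap_sum_take_add block hg hpos]
    simp only [List.getElem_finRange, Fin.cast_mk, Fin.eta]
    rw [← hscores g, List.getD_flatMap_const_mul_add _ hj' hs']
    simp [scores, List.getElem?_range hs]
end

section
/- In DCFR with parameters α > 0 and β ≤ 0, cumulative regrets remain bounded: if the per-iteration regrets satisfy |r^t(I,a)| ≤ Δ for all t, and the discount factor d^{t} equals t^α/(t^α+1) when the cumulative regret is positive and t^β/(t^β+1) ≤ 1/2 otherwise, then the negative part of the cumulative regret R^t(I,a) is bounded below by −2Δ for all t. -/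
/-- DCFR cumulative regrets are bounded below by −2Δ: with `R 0 = 0`,
`R (t+1) = R t · d t + r (t+1)`, discounts `d t = t^α/(t^α+1)` on positive
regret and `d t = t^β/(t^β+1)` on nonpositive regret, `α > 0`, `β ≤ 0`, and
`|r t| ≤ Δ`, we have `R t ≥ −2Δ` for all `t`. -/
theorem stmt_17 (α β : ℝ) (hα : 0 < α) (hβ : β ≤ 0)
    (Δ : ℝ) (r : ℕ → ℝ) (hr : ∀ t, |r t| ≤ Δ)
    (d : ℕ → ℝ) (R : ℕ → ℝ)
    (hR0 : R 0 = 0)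
    (hdpos : ∀ t, 0 < R t → d t = (t : ℝ) ^ α / ((t : ℝ) ^ α + 1))
    (hdneg : ∀ t, R t ≤ 0 → d t = (t : ℝ) ^ β / ((t : ℝ) ^ β + 1))
    (hRrec : ∀ t, R (t + 1) = R t * d t + r (t + 1)) :
    ∀ t, -2 * Δ ≤ R t := by
  have hΔ : 0 ≤ Δ := le_trans (abs_nonneg _) (hr 0)
  intro t
  induction t with
  | zero => rw [hR0]; linarith
  | succ t ih =>
    have hrt : -Δ ≤ r (t + 1) := by
      have := abs_le.mp (hr (t + 1)); linarith [this.1]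
    rw [hRrec t]
    rcases le_or_gt (R t) 0 with hle | hpos
    · have hd := hdneg t hle
      have htβ : (0:ℝ) ≤ (t : ℝ) ^ β := Real.rpow_nonneg (Nat.cast_nonneg t) β
      have htβ1 : (t : ℝ) ^ β ≤ 1 := by
        rcases Nat.eq_zero_or_pos t with h0 | h1
        · subst h0
          rcases eq_or_lt_of_le hβ with hb | hb
          · rw [hb, Real.rpow_zero]
          · simp [Real.zero_rpow (ne_of_lt hb)]
        · exact Real.rpow_le_one_of_one_le_of_nonpos (by exact_mod_cast h1) hβ
      have hden : (0:ℝ) < (t : ℝ) ^ β + 1 := by linarith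
      have hd2 : d t ≤ 1 / 2 := by
        rw [hd, div_le_div_iff₀ hden (by norm_num)]; linarith
      have hd0 : 0 ≤ d t := by
        rw [hd]; exact div_nonneg htβ hden.le
      have h1 : R t * (1/2) ≤ R t * d t :=
        mul_le_mul_of_nonpos_left hd2 hle
      nlinarith
    · have hd := hdpos t hpos
      have htα : (0:ℝ) ≤ (t : ℝ) ^ α := Real.rpow_nonneg (Nat.cast_nonneg t) α
      have hd0 : 0 ≤ d t := by
        rw [hd]; exact div_nonneg htα (by linarith)
      nlinarith
end
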